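/- Consider the one-clock priced timed automaton module Mod (for testing/decrementing counter c₁) with locations, cost rates and transitions as follows: A₀(1), B₀(3), C₀(1), A(1), B(3), C(1), C'(1), D(1), E₁(3), E₂(3), F₁(1), F₂(1), G₁(3), G₂(3), H₁(1), H₂(1), A₂(1), B₂(2), C₂(1), D₂(1); transitions (all of discrete cost 0 except C₂→D₂ of discrete cost 1): A₀→B₀ (x<1), B₀→C₀ (x=1, x:=0), C₀→C, C→D, D→A (x<1), A→B, B→C (x=1, x:=0), C→C', C'→C, D→E₁ (x=1, x:=0), D→E₂ (x>1, x:=0), E₁→F₁, E₂→F₂, F₁→G₁ (x:=0), F₂→G₂ (x:=0), G₁→H₁, G₂→H₂, H₂→A₂, A₂→B₂, B₂→C₂ (x=1, x:=0), C₂→D₂, plus an exit from A₀ (x=1) and from H₁ to module Mod_j, and an exit from D₂ to module Mod_k. Suppose there is a run ρ entering Mod at A₀ with clock value x = x₀ ≤ 1 and exiting towards Mod_k with clock value x = x₁, such that: (i) no time elapses in A₀, C₀, D, A, C', F₂, H₂, A₂ and D₂; (ii) every visit to C₀ or C' is eventually strictly followed by a visit to C' or F₂; (iii) the accumulated cost of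 ρ equals exactly 3 along each portion between A or A₀ and the next visit to D, along each portion between C₀ or C' and the next visit to C' or F₂, along the portion between the last visit to D and H₂, and along the portion between H₂ and D₂. Then x₁ = 2·x₀ and for every n ∈ ℕ, x₀ ≠ 3^(−n). -/

import Mathlib

/-! ## One-clock priced timed automata: common definitions -/

/-- Comparison operators used in clock constraints and cost constraints. -/
inductive Cmp
  | lt | le | eq | ge | gt
  deriving DecidableEq

/-- Satisfaction of `x ∼ c`. -/
def Cmp.sat : Cmp → ℝ → ℝ → Prop
  | .lt, x, c => x < c
  | .le, x, c => x ≤ c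
  | .eq, x, c => x = c
  | .ge, x, c => c ≤ x
  | .gt, x, c => c < x

/-- A guard (clock constraint) is a finite conjunction of constraints `x ∼ c`, `c ∈ ℕ`. -/
abbrev PGuard := List (Cmp × ℕ)

/-- A clock value satisfies a guard if it satisfies all its atomic constraints. -/
def PGuard.sat (g : PGuard) (x : ℝ) : Prop := ∀ p ∈ g, Cmp.sat p.1 x (p.2 : ℝ)

/-- A transition of a one-clock priced timed automaton: source, guard, reset set
(`reset = true` iff the clock is reset), target, and discrete cost. -/
structure PTrans (Q : Type) where
  src : Q
  guard : PGuard
  reset : Bool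
  tgt : Q
  dcost : ℕ

/-- A one-clock priced timed automaton with a single cost function:
a finite set `Q` of locations, an initial location, a finite set of transitions,
invariants, and a cost rate for each location (discrete costs are on transitions). -/
structure PTA (Q : Type) [Fintype Q] where
  init : Q
  E : Set (PTrans Q)
  finE : E.Finite
  Inv : Q → PGuard
  rate : Q → ℕ

variable {Q : Type} [Fintype Q]

/-- A delay move `(q,v) → (q,v+t)` of cost `t · rate q`, allowed if the invariant
holds throughout. -/
def DelayMove (A : PTA Q) (s : Q × ℝ) (c : ℝ) (s' : Q × ℝ) : Prop :=
  ∃ t : ℝ, 0 ≤ t ∧ s' = (s.1, s.2 + t) ∧ c = t * (A.rate s.1 : ℝ) ∧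
    ∀ t' : ℝ, 0 ≤ t' → t' ≤ t → PGuard.sat (A.Inv s.1) (s.2 + t')

/-- A discrete move via a transition of `A`, of cost the discrete cost of the transition. -/
def DiscMove (A : PTA Q) (s : Q × ℝ) (c : ℝ) (s' : Q × ℝ) : Prop :=
  ∃ e ∈ A.E, e.src = s.1 ∧ e.tgt = s'.1 ∧ PGuard.sat e.guard s.2 ∧
    s'.2 = (if e.reset then 0 else s.2) ∧ PGuard.sat (A.Inv e.tgt) s'.2 ∧ c = (e.dcost : ℝ)

/-- A simple move of the timed transition system `TTS_A`. -/
def PMove (A : PTA Q) (s : Q × ℝ) (c : ℝ) (s' : Q × ℝ) : Prop :=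
  DelayMove A s c s' ∨ DiscMove A s c s'

/-- `PPath A s c s'`: there is a path (finite sequence of simple moves) in `TTS_A`
from `s` to `s'` of total cost `c`. -/
inductive PPath (A : PTA Q) : (Q × ℝ) → ℝ → (Q × ℝ) → Prop
  | refl (s : Q × ℝ) : PPath A s 0 s
  | step {s s' s'' : Q × ℝ} {c c' : ℝ} :
      PMove A s c s' → PPath A s' c' s'' → PPath A s (c + c') s''

/-- Reachability in `TTS_A` (notation `⇝*` in the paper). -/
def PReach (A : PTA Q) (s s' : Q × ℝ) : Prop := ∃ c : ℝ, PPath A s c s'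

/-- A mixed move: a delay move followed by a discrete move. -/
def MixedMove (A : PTA Q) (s : Q × ℝ) (c : ℝ) (s' : Q × ℝ) : Prop :=
  ∃ (c₁ c₂ : ℝ) (m : Q × ℝ), DelayMove A s c₁ m ∧ DiscMove A m c₂ s' ∧ c = c₁ + c₂

/-- A priced timed automaton is non-blocking. -/
def NonBlocking (A : PTA Q) : Prop :=
  ∀ (q : Q) (v : ℝ), 0 ≤ v → ∃ (c : ℝ) (s' : Q × ℝ), MixedMove A (q, v) c s'

/-- The constants appearing in the clock constraints (guards and invariants) of `A`. -/
def PTA.consts (A : PTA Q) : Set ℕ :=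
  {c | (∃ e ∈ A.E, ∃ p ∈ e.guard, p.2 = c) ∨ ∃ q : Q, ∃ p ∈ A.Inv q, p.2 = c}

/-- The lcm of all positive cost rates labeling a location of `A`. -/
def posLcm (A : PTA Q) : ℕ :=
  Finset.lcm (Finset.univ.filter fun q => 0 < A.rate q) A.rate

/-! ## Finite runs (sequences of mixed moves) -/

/-- A finite run of `A` with `k` mixed moves: `st i` is the `i`-th state, the `i`-th mixed
move delays for `d i` time units (with the invariant satisfied throughout) and then takes
a discrete move of cost `cc i` to `st (i+1)`. -/
structure FinRun (A : PTA Q) (k : ℕ) where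
  st : ℕ → Q × ℝ
  d : ℕ → ℝ
  cc : ℕ → ℝ
  hdel : ∀ i < k, 0 ≤ d i ∧
    ∀ t' : ℝ, 0 ≤ t' → t' ≤ d i → PGuard.sat (A.Inv (st i).1) ((st i).2 + t')
  hdisc : ∀ i < k, DiscMove A ((st i).1, (st i).2 + d i) (cc i) (st (i + 1))

/-- Cost of the `i`-th mixed move of a finite run. -/
def FinRun.stepCost {A : PTA Q} {k : ℕ} (ρ : FinRun A k) (i : ℕ) : ℝ :=
  ρ.d i * (A.rate (ρ.st i).1 : ℝ) + ρ.cc i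

/-- Locations of the test/decrement module (for counter `c₁`), plus the entry points
`ExitJ` of module `Mod_j` and `ExitK` of module `Mod_k`. -/
inductive L12
  | A0 | B0 | C0 | A | B | C | C' | D | E1 | E2 | F1 | F2 | G1 | G2 | H1 | H2
  | A2 | B2 | C2 | D2 | ExitJ | ExitK
  deriving DecidableEq

instance instFintypeL12 : Fintype L12 where
  elems := {.A0, .B0, .C0, .A, .B, .C, .C', .D, .E1, .E2, .F1, .F2, .G1, .G2, .H1, .H2,
    .A2, .B2, .C2, .D2, .ExitJ, .ExitK}
  complete := fun x => by cases x <;> simp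

/-- Transitions of the test/decrement module (all of discrete cost 0 except `C₂→D₂`,
of discrete cost 1), including the exits towards `Mod_j` (from `A₀` on `x=1` and from
`H₁`) and towards `Mod_k` (from `D₂`). -/
def trans12 : List (PTrans L12) :=
  [⟨.A0, [(Cmp.lt, 1)], false, .B0, 0⟩,
   ⟨.B0, [(Cmp.eq, 1)], true, .C0, 0⟩,
   ⟨.C0, [], false, .C, 0⟩,
   ⟨.C, [], false, .D, 0⟩,
   ⟨.D, [(Cmp.lt, 1)], false, .A, 0⟩,
   ⟨.A, [], false, .B, 0⟩,
   ⟨.B, [(Cmp.eq, 1)], true, .C, 0⟩,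
   ⟨.C, [], false, .C', 0⟩,
   ⟨.C', [], false, .C, 0⟩,
   ⟨.D, [(Cmp.eq, 1)], true, .E1, 0⟩,
   ⟨.D, [(Cmp.gt, 1)], true, .E2, 0⟩,
   ⟨.E1, [], false, .F1, 0⟩,
   ⟨.E2, [], false, .F2, 0⟩,
   ⟨.F1, [], true, .G1, 0⟩,
   ⟨.F2, [], true, .G2, 0⟩,
   ⟨.G1, [], false, .H1, 0⟩,
   ⟨.G2, [], false, .H2, 0⟩,
   ⟨.H2, [], false, .A2, 0⟩,
   ⟨.A2, [], false, .B2, 0⟩,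
   ⟨.B2, [(Cmp.eq, 1)], true, .C2, 0⟩,
   ⟨.C2, [], false, .D2, 1⟩,
   ⟨.A0, [(Cmp.eq, 1)], false, .ExitJ, 0⟩,
   ⟨.H1, [], false, .ExitJ, 0⟩,
   ⟨.D2, [], false, .ExitK, 0⟩]

/-- The test/decrement module, with cost rates
`A₀,C₀,A,C,C',D,F₁,F₂,H₁,H₂,A₂,C₂,D₂ : 1`, `B₀,B,E₁,E₂,G₁,G₂ : 3`, `B₂ : 2`. -/
def Mod12 : PTA L12 where
  init := .A0
  E := {e | e ∈ trans12}
  finE := List.finite_toSet _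
  Inv := fun _ => []
  rate := fun q => match q with
    | .B0 | .B | .E1 | .E2 | .G1 | .G2 => 3
    | .B2 => 2
    | _ => 1


/-!
Write `P(i)` for the cost of the first `i` mixed moves. The run is a sequence of phases
`A₀/A → B₀/B → C₀/C → (C' → C)* → D`: a phase entered with clock `y` pays `3(1 - y)` in `B`,
which waits until the clock is `1`, and then as much as the clock grows in `C`; since the phase
costs exactly `3`, the clock at `D` is `3y`. So phase `p` starts at cost `3p` with clock `3ᵖ x₀`,
and the guards `x < 1` (towards `A`) and `x > 1` (towards `E₂`) give `3^q x₀ < 1 < 3^(q+1) x₀`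
for the last phase `q`, which excludes `x₀ = 3⁻ⁿ`.

Consecutive visits to `C₀`, `C'` and `F₂` differ in cost by exactly `3`, hence
`P(F₂) ≡ P(C₀) = 3 - 3x₀ (mod 3)`. On the other hand `P(F₂) = 3(q+1) + 3t`, where `t ∈ [0, 1]`
is the time spent in `E₂`; as `0 < x₀ < 1`, integrality forces `t = 1 - x₀`. The constraints on
`D → H₂` and `H₂ → D₂` then leave the clock `2 - 2t = 2x₀` on exit.
-/

namespace FinRun

variable {A : PTA Q} {k : ℕ} (ρ : FinRun A k)

def cost (n : ℕ) : ℝ := ∑ i ∈ Finset.range n, ρ.stepCost i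

lemma cost_succ (i : ℕ) : ρ.cost (i + 1) = ρ.cost i + ρ.stepCost i :=
  Finset.sum_range_succ _ _

lemma sum_Ico_stepCost {i j : ℕ} (h : i ≤ j) :
    ∑ m ∈ Finset.Ico i j, ρ.stepCost m = ρ.cost j - ρ.cost i :=
  Finset.sum_Ico_eq_sub _ h

def NoDelayAt (q : Q) : Prop := ∀ i < k, (ρ.st i).1 = q → ρ.d i = 0

lemma exists_trans {i : ℕ} (hi : i < k) :
    ∃ e ∈ A.E, e.src = (ρ.st i).1 ∧ e.tgt = (ρ.st (i + 1)).1 := by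
  obtain ⟨e, he, hsrc, htgt, -⟩ := ρ.hdisc i hi
  exact ⟨e, he, hsrc, htgt⟩

lemma step_of_unique_trans {i : ℕ} (hi : i < k) {e₀ : PTrans Q}
    (h : ∀ e ∈ A.E, e.src = (ρ.st i).1 → e.tgt = (ρ.st (i + 1)).1 → e = e₀) :
    e₀.tgt = (ρ.st (i + 1)).1 ∧ e₀.guard.sat ((ρ.st i).2 + ρ.d i) ∧
      (ρ.st (i + 1)).2 = (if e₀.reset then 0 else (ρ.st i).2 + ρ.d i) ∧
      ρ.stepCost i = ρ.d i * A.rate (ρ.st i).1 + e₀.dcost := by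
  obtain ⟨e, he, hsrc, htgt, hg, hx, -, hc⟩ := ρ.hdisc i hi
  obtain rfl := h e he hsrc htgt
  exact ⟨htgt, hg, hx, by rw [stepCost, hc]⟩

lemma loc_mem_of_le {S : Set Q} (hS : ∀ e ∈ A.E, e.tgt ∈ S → e.src ∈ S) {i j : ℕ}
    (hij : i ≤ j) (hj : j ≤ k) (h : (ρ.st j).1 ∈ S) : (ρ.st i).1 ∈ S := by
  induction j, hij using Nat.le_induction with
  | base => exact h
  | succ j _ ih =>
    obtain ⟨e, he, hsrc, htgt⟩ := ρ.exists_trans (i := j) (by omega)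
    exact ih (by omega) (hsrc ▸ hS e he (htgt ▸ h))

end FinRun

namespace Mod12

def loopLocs : Finset L12 := {.A0, .B0, .C0, .A, .B, .C, .C', .D}

lemma src_mem_loopLocs :
    ∀ e ∈ Mod12.E, e.tgt ∈ (loopLocs : Set L12) → e.src ∈ (loopLocs : Set L12) := by
  simp only [Finset.mem_coe]
  exact (by decide : ∀ e ∈ trans12, e.tgt ∈ loopLocs → e.src ∈ loopLocs)

lemma rate_def (l : L12) : Mod12.rate l = match l with
    | .B0 | .B | .E1 | .E2 | .G1 | .G2 => 3
    | .B2 => 2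
    | _ => 1 := rfl

/-- The invariant of phase `p`, entered with clock `y`: a state `(l, x)` reached at total cost
`c`. -/
def PhaseState (p : ℕ) (y : ℝ) : L12 → ℝ → ℝ → Prop
  | .A0, x, c | .A, x, c | .B0, x, c | .B, x, c => x = y ∧ c = 3 * p
  | .C0, x, c | .C, x, c | .C', x, c | .D, x, c => c = 3 * p + 3 - 3 * y + x
  | _, _, _ => False

variable {k : ℕ} (ρ : FinRun Mod12 k)

def CostsThreeUntilD : Prop :=
  ∀ i j : ℕ, i < j → j ≤ k → ((ρ.st i).1 = .A ∨ (ρ.st i).1 = .A0) → (ρ.st j).1 = .D →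
    (∀ m, i < m → m < j → (ρ.st m).1 ≠ .D) → ∑ m ∈ Finset.Ico i j, ρ.stepCost m = 3

/-- Position `i` lies in phase `p`, which started at position `a`. -/
structure Phase (x₀ : ℝ) (p a i : ℕ) : Prop where
  start_le : a ≤ i
  start_loc : (ρ.st a).1 = .A0 ∨ (ρ.st a).1 = .A
  cost_start : ρ.cost a = 3 * p
  clock_lt : 3 ^ p * x₀ < 1
  no_D : ∀ r, a < r → r < i → (ρ.st r).1 ≠ .D
  state : PhaseState p (3 ^ p * x₀) (ρ.st i).1 (ρ.st i).2 (ρ.cost i)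

variable {ρ}

lemma loc_mem_loopLocs_of_le {i j : ℕ} (hij : i ≤ j) (hj : j ≤ k)
    (h : (ρ.st j).1 ∈ loopLocs) : (ρ.st i).1 ∈ loopLocs :=
  ρ.loc_mem_of_le (S := loopLocs) src_mem_loopLocs hij hj h

lemma Phase.clock_cost_of_D {x₀ : ℝ} {p a i : ℕ} (h : Phase ρ x₀ p a i)
    (hD : (ρ.st i).1 = .D) (hi : i ≤ k) (hcost : CostsThreeUntilD ρ) :
    (ρ.st i).2 = 3 ^ (p + 1) * x₀ ∧ ρ.cost i = 3 * (p + 1) := by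
  have hai : a < i := lt_of_le_of_ne h.start_le <| by
    rintro rfl; rcases h.start_loc with h' | h' <;> simp [hD] at h'
  have h3 := hcost a i hai hi h.start_loc.symm hD h.no_D
  have hst := h.state
  rw [hD] at hst
  simp only [PhaseState] at hst
  rw [ρ.sum_Ico_stepCost hai.le, h.cost_start] at h3
  exact ⟨by rw [pow_succ]; linarith, by linarith⟩

lemma Phase.next_of_D {x₀ : ℝ} {p a i : ℕ} (h : Phase ρ x₀ p a i) (hi : i < k)
    (hDi : (ρ.st i).1 = .D) (hloop : (ρ.st (i + 1)).1 ∈ loopLocs) (hD : ρ.NoDelayAt .D)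
    (hcost : CostsThreeUntilD ρ) : Phase ρ x₀ (p + 1) (i + 1) (i + 1) := by
  have hDA : ∀ e ∈ trans12, e.src = .D → e.tgt ∈ loopLocs →
      e = ⟨.D, [(.lt, 1)], false, .A, 0⟩ := by
    simp [trans12, loopLocs]
  obtain ⟨htgt, hg, hx, hc⟩ :=
    ρ.step_of_unique_trans hi fun e he hs ht => hDA e he (hs.trans hDi) (ht ▸ hloop)
  obtain ⟨hxD, hcD⟩ := h.clock_cost_of_D hDi hi.le hcost
  simp only [PGuard.sat, Cmp.sat, List.mem_singleton, forall_eq, Nat.cast_one, Nat.cast_zero,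
    if_false, Bool.false_eq_true, hD i hi hDi, zero_mul, add_zero] at hg hx hc
  have hcost' : ρ.cost (i + 1) = 3 * (p + 1) := by rw [ρ.cost_succ, hc, hcD, add_zero]
  refine ⟨le_rfl, .inr htgt.symm, by exact_mod_cast hcost', by linarith, fun r h1 h2 => by omega,
    ?_⟩
  rw [← htgt]
  exact ⟨by linarith, by exact_mod_cast hcost'⟩

lemma Phase.succ_of_ne_D {x₀ : ℝ} {p a i : ℕ} (h : Phase ρ x₀ p a i) (hi : i < k)
    (hDi : (ρ.st i).1 ≠ .D) (hloop : (ρ.st (i + 1)).1 ∈ loopLocs)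
    (hA0 : ρ.NoDelayAt .A0) (hA : ρ.NoDelayAt .A) : Phase ρ x₀ p a (i + 1) := by
  obtain ⟨e, he, hsrc, htgt, hg, hx, -, hc⟩ := ρ.hdisc i hi
  have hcost : ρ.cost (i + 1) = ρ.cost i + ρ.d i * Mod12.rate (ρ.st i).1 + e.dcost := by
    rw [ρ.cost_succ, FinRun.stepCost, hc]; ring
  have hd : (ρ.st i).1 = .A0 ∨ (ρ.st i).1 = .A → ρ.d i = 0 :=
    fun h => h.elim (hA0 i hi) (hA i hi)
  have hst := h.state
  refine ⟨by have := h.start_le; omega, h.start_loc, h.cost_start, h.clock_lt,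
    fun r har hri => ?_, ?_⟩
  · rcases Nat.lt_succ_iff_lt_or_eq.mp hri with hri | rfl
    exacts [h.no_D r har hri, hDi]
  replace he : e ∈ trans12 := he
  simp only [trans12, List.mem_cons, List.not_mem_nil, or_false] at he
  rcases he with rfl|rfl|rfl|rfl|rfl|rfl|rfl|rfl|rfl|rfl|rfl|rfl|rfl|rfl|rfl|rfl|rfl|rfl|rfl|rfl|rfl|rfl|rfl|rfl
  all_goals
    simp only [PGuard.sat, Cmp.sat, List.mem_cons, List.not_mem_nil, or_false, forall_eq,
      Nat.cast_one, Nat.cast_zero, if_true, if_false, Bool.false_eq_true, add_zero] at hg hx hcost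
    rw [← hsrc] at hst hcost hDi hd
    rw [← htgt] at hloop ⊢
    simp only [PhaseState, rate_def, Nat.cast_one, Nat.cast_ofNat, mul_one, true_or, or_true,
      forall_const] at hst hcost hd ⊢
  all_goals first
    | exact absurd hloop (by decide)
    | exact hst.elim
    | exact absurd rfl hDi
    | skip
  -- The eight moves inside a phase: at rate 1 clock and cost grow alike, and `B₀`/`B` pay
  -- `3(1 - y)` waiting for the clock to reach `1` before resetting it.
  all_goals
    try obtain ⟨hxy, hc⟩ := hst
    first | constructor <;> linarith | linarith

lemma exists_phase {x₀ : ℝ} {T : ℕ} (h0 : ρ.st 0 = (.A0, x₀)) (hx₀ : x₀ < 1) (hT : T ≤ k)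
    (hTD : (ρ.st T).1 = .D) (hA0 : ρ.NoDelayAt .A0) (hA : ρ.NoDelayAt .A)
    (hD : ρ.NoDelayAt .D) (hcost : CostsThreeUntilD ρ) :
    ∃ p a, Phase ρ x₀ p a T := by
  suffices ∀ i ≤ T, ∃ p a, Phase ρ x₀ p a i from this T le_rfl
  intro i hi
  induction i with
  | zero =>
    refine ⟨0, 0, le_rfl, .inl (by rw [h0]), by simp [FinRun.cost], by simpa using hx₀,
      fun r h1 h2 => by omega, ?_⟩
    rw [h0]
    simp [PhaseState, FinRun.cost]
  | succ i ih =>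
    obtain ⟨p, a, h⟩ := ih (by omega)
    have hloop := loc_mem_loopLocs_of_le hi hT (by rw [hTD]; decide)
    by_cases hDi : (ρ.st i).1 = .D
    · exact ⟨p + 1, i + 1, h.next_of_D (by omega) hDi hloop hD hcost⟩
    · exact ⟨p, a, h.succ_of_ne_D (by omega) hDi hloop hA0 hA⟩

lemma initial_moves {x₀ : ℝ} {T : ℕ} (h0 : ρ.st 0 = (.A0, x₀)) (hA0 : ρ.NoDelayAt .A0)
    (hT : T ≤ k) (hTD : (ρ.st T).1 = .D) :
    x₀ < 1 ∧ (ρ.st 2).1 = .C0 ∧ ρ.cost 2 = 3 - 3 * x₀ := by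
  have hloop i (hi : i ≤ T) : (ρ.st i).1 ∈ loopLocs :=
    loc_mem_loopLocs_of_le hi hT (by rw [hTD]; decide)
  have hT1 : 1 ≤ T := Nat.pos_of_ne_zero <| by rintro rfl; rw [h0] at hTD; cases hTD
  have hA0B0 : ∀ e ∈ trans12, e.src = .A0 → e.tgt ∈ loopLocs →
      e = ⟨.A0, [(.lt, 1)], false, .B0, 0⟩ := by
    simp [trans12, loopLocs]
  obtain ⟨h1, hg0, hx1, hc0⟩ := ρ.step_of_unique_trans (i := 0) (by omega) fun e he hs ht =>
    hA0B0 e he (by rw [hs, h0]) (ht ▸ hloop 1 hT1)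
  have hT2 : 2 ≤ T := by
    by_contra hT2
    rw [show T = 1 by omega, ← h1] at hTD
    cases hTD
  have hB0C0 : ∀ e ∈ trans12, e.src = .B0 → e = ⟨.B0, [(.eq, 1)], true, .C0, 0⟩ := by
    simp [trans12]
  obtain ⟨h2, hg1, -, hc1⟩ := ρ.step_of_unique_trans (i := 1) (by omega) fun e he hs _ =>
    hB0C0 e he (by rw [hs, ← h1])
  rw [h0] at hg0 hx1 hc0
  rw [← h1] at hc1
  simp only [PGuard.sat, Cmp.sat, List.mem_singleton, forall_eq, Nat.cast_one, Nat.cast_zero,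
    if_false, Bool.false_eq_true, hA0 0 (by omega) (by rw [h0])] at hg0 hx1 hc0 hg1
  refine ⟨by linarith, h2.symm, ?_⟩
  rw [FinRun.cost, Finset.sum_range_succ, Finset.sum_range_one, hc0, hc1]
  simp only [rate_def]
  push_cast
  linarith

def tailLoc : ℕ → L12
  | 0 => .D | 1 => .E2 | 2 => .F2 | 3 => .G2 | 4 => .H2 | 5 => .A2 | 6 => .B2 | 7 => .C2
  | 8 => .D2 | _ => .ExitK

lemma exists_tail (h0 : (ρ.st 0).1 = .A0) (hk : (ρ.st k).1 = .ExitK) :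
    ∃ T, k = T + 9 ∧ ∀ j ≤ 9, (ρ.st (T + j)).1 = tailLoc j := by
  -- Each `tailLoc (j + 1)` can only be entered from `tailLoc j`.
  have key : ∀ n ≤ 9, n ≤ k ∧ (ρ.st (k - n)).1 = tailLoc (9 - n) := by
    intro n hn
    induction n with
    | zero => exact ⟨Nat.zero_le _, hk⟩
    | succ n ih =>
      obtain ⟨hnk, hloc⟩ := ih (by omega)
      have hnk' : n < k := by
        by_contra
        rw [show k - n = 0 by omega, h0] at hloc
        exact (by decide : ∀ j < 10, tailLoc j ≠ .A0) (9 - n) (by omega) hloc.symm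
      obtain ⟨e, he, hs, ht⟩ := ρ.exists_trans (i := k - (n + 1)) (by omega)
      rw [show k - (n + 1) + 1 = k - n by omega, hloc, show 9 - n = 8 - n + 1 by omega] at ht
      refine ⟨hnk', ?_⟩
      rw [← hs, show 9 - (n + 1) = 8 - n by omega]
      exact (by decide : ∀ j < 9, ∀ e ∈ trans12, e.tgt = tailLoc (j + 1) → e.src = tailLoc j)
        (8 - n) (by omega) e he ht
  have h9 := (key 9 le_rfl).1
  refine ⟨k - 9, by omega, fun j hj => ?_⟩
  have := (key (9 - j) (by omega)).2
  rwa [show k - (9 - j) = k - 9 + j by omega, show 9 - (9 - j) = j by omega] at this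

lemma tail_step {T j : ℕ} (hk : k = T + 9) (hT : ∀ j ≤ 9, (ρ.st (T + j)).1 = tailLoc j)
    (hj : j < 9) {e₀ : PTrans L12}
    (h : ∀ e ∈ trans12, e.src = tailLoc j → e.tgt = tailLoc (j + 1) → e = e₀) :
    e₀.guard.sat ((ρ.st (T + j)).2 + ρ.d (T + j)) ∧
      (ρ.st (T + j + 1)).2 = (if e₀.reset then 0 else (ρ.st (T + j)).2 + ρ.d (T + j)) ∧
      ρ.stepCost (T + j) = ρ.d (T + j) * Mod12.rate (tailLoc j) + e₀.dcost := by
  obtain ⟨-, hg, hx, hc⟩ := ρ.step_of_unique_trans (i := T + j) (by omega) fun e he hs ht =>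
    h e he (hs.trans (hT j (by omega))) (ht.trans (hT (j + 1) (by omega)))
  exact ⟨hg, hx, by rw [hc, hT j (by omega)]⟩

lemma tail_costs {T : ℕ} (hk : k = T + 9) (hT : ∀ j ≤ 9, (ρ.st (T + j)).1 = tailLoc j)
    (hD : ρ.NoDelayAt .D) (hF2 : ρ.NoDelayAt .F2) (hH2 : ρ.NoDelayAt .H2)
    (hA2 : ρ.NoDelayAt .A2) (hD2 : ρ.NoDelayAt .D2)
    (hcost₃ : ∀ i j : ℕ, i < j → j ≤ k →
      (ρ.st i).1 = L12.D → (∀ m, i < m → m ≤ k → (ρ.st m).1 ≠ L12.D) →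
      (ρ.st j).1 = L12.H2 →
      ∑ m ∈ Finset.Ico i j, ρ.stepCost m = 3)
    (hcost₄ : ∀ i j : ℕ, i < j → j ≤ k →
      (ρ.st i).1 = L12.H2 → (ρ.st j).1 = L12.D2 →
      (∀ m, i < m → m < j → (ρ.st m).1 ≠ L12.D2) →
      ∑ m ∈ Finset.Ico i j, ρ.stepCost m = 3) :
    1 < (ρ.st T).2 ∧ ∃ t, 0 ≤ t ∧ t ≤ 1 ∧ ρ.cost (T + 2) = ρ.cost T + 3 * t ∧
      (ρ.st k).2 = 2 - 2 * t := by
  obtain ⟨hg0, hx1, hc0⟩ := tail_step hk hT (j := 0) (by norm_num)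
    (e₀ := ⟨.D, [(.gt, 1)], true, .E2, 0⟩) (by simp [trans12, tailLoc])
  obtain ⟨-, hx2, hc1⟩ := tail_step hk hT (j := 1) (by norm_num)
    (e₀ := ⟨.E2, [], false, .F2, 0⟩) (by simp [trans12, tailLoc])
  obtain ⟨-, hx3, hc2⟩ := tail_step hk hT (j := 2) (by norm_num)
    (e₀ := ⟨.F2, [], true, .G2, 0⟩) (by simp [trans12, tailLoc])
  obtain ⟨-, hx4, hc3⟩ := tail_step hk hT (j := 3) (by norm_num)
    (e₀ := ⟨.G2, [], false, .H2, 0⟩) (by simp [trans12, tailLoc])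
  obtain ⟨-, hx5, hc4⟩ := tail_step hk hT (j := 4) (by norm_num)
    (e₀ := ⟨.H2, [], false, .A2, 0⟩) (by simp [trans12, tailLoc])
  obtain ⟨-, hx6, hc5⟩ := tail_step hk hT (j := 5) (by norm_num)
    (e₀ := ⟨.A2, [], false, .B2, 0⟩) (by simp [trans12, tailLoc])
  obtain ⟨hg6, hx7, hc6⟩ := tail_step hk hT (j := 6) (by norm_num)
    (e₀ := ⟨.B2, [(.eq, 1)], true, .C2, 0⟩) (by simp [trans12, tailLoc])
  obtain ⟨-, hx8, hc7⟩ := tail_step hk hT (j := 7) (by norm_num)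
    (e₀ := ⟨.C2, [], false, .D2, 1⟩) (by simp [trans12, tailLoc])
  obtain ⟨-, hx9, -⟩ := tail_step hk hT (j := 8) (by norm_num)
    (e₀ := ⟨.D2, [], false, .ExitK, 0⟩) (by simp [trans12, tailLoc])
  subst hk
  have hd0 := hD T (by omega) (hT 0 (by norm_num))
  have hd2 := hF2 (T + 2) (by omega) (hT 2 (by norm_num))
  have hd4 := hH2 (T + 4) (by omega) (hT 4 (by norm_num))
  have hd5 := hA2 (T + 5) (by omega) (hT 5 (by norm_num))
  have hd8 := hD2 (T + 8) (by omega) (hT 8 (by norm_num))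
  have h3 := hcost₃ T (T + 4) (by omega) (by omega) (hT 0 (by norm_num))
    (fun m h1 h2 => by
      rw [show m = T + (m - T) by omega, hT (m - T) (by omega)]
      exact (by decide : ∀ j < 10, 0 < j → tailLoc j ≠ .D) _ (by omega) (by omega))
    (hT 4 (by norm_num))
  have h4 := hcost₄ (T + 4) (T + 8) (by omega) (by omega) (hT 4 (by norm_num))
    (hT 8 (by norm_num)) (fun m h1 h2 => by
      rw [show m = T + (m - T) by omega, hT (m - T) (by omega)]
      exact (by decide : ∀ j < 8, 4 < j → tailLoc j ≠ .D2) _ (by omega) (by omega))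
  rw [Finset.sum_Ico_eq_sum_range] at h3 h4
  simp only [Nat.add_sub_cancel_left, show T + 8 - (T + 4) = 4 by omega, Finset.sum_range_succ,
    Finset.sum_range_zero, zero_add, add_zero, add_assoc, Nat.reduceAdd] at h3 h4
  simp only [PGuard.sat, Cmp.sat, List.mem_singleton, forall_eq, Nat.cast_one, Nat.cast_zero,
    Nat.cast_ofNat, if_true, if_false, Bool.false_eq_true, tailLoc, rate_def, add_zero, add_assoc,
    Nat.reduceAdd] at hg0 hx1 hc0 hx2 hc1 hx3 hc2 hx4 hc3 hx5 hc4 hx6 hc5 hg6 hx7 hc6 hx8 hc7 hx9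
  have ht1 := (ρ.hdel (T + 1) (by omega)).1
  have ht3 := (ρ.hdel (T + 3) (by omega)).1
  refine ⟨by linarith, ρ.d (T + 1), ht1, by linarith, ?_, by linarith⟩
  rw [show T + 2 = T + 1 + 1 from rfl, ρ.cost_succ, ρ.cost_succ, hc0, hc1, hd0]
  ring

lemma loc_ne_F2_of_lt {T : ℕ} (hk : k = T + 9) (hT : ∀ j ≤ 9, (ρ.st (T + j)).1 = tailLoc j) :
    ∀ r < T + 2, (ρ.st r).1 ≠ .F2 := by
  intro r hr
  have hTD : (ρ.st T).1 = .D := hT 0 (by norm_num)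
  rcases Nat.lt_succ_iff_lt_or_eq.mp hr with hr | rfl
  · have := loc_mem_loopLocs_of_le (ρ := ρ) (i := r) (j := T) (by omega) (by omega)
      (by rw [hTD]; decide)
    exact fun h => absurd this (by rw [h]; decide)
  · rw [hT 1 (by norm_num)]; decide

lemma exists_cost_eq_of_marker {n : ℕ} (hn : n ≤ k) (h2 : (ρ.st 2).1 = .C0)
    (hF2 : ∀ r < n, (ρ.st r).1 ≠ .F2)
    (hcost₂ : ∀ i j : ℕ, i < j → j ≤ k →
      ((ρ.st i).1 = L12.C0 ∨ (ρ.st i).1 = L12.C') →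
      ((ρ.st j).1 = L12.C' ∨ (ρ.st j).1 = L12.F2) →
      (∀ m, i < m → m < j → ¬((ρ.st m).1 = L12.C' ∨ (ρ.st m).1 = L12.F2)) →
      ∑ m ∈ Finset.Ico i j, ρ.stepCost m = 3) :
    ∀ m ≤ n, 2 < m → ((ρ.st m).1 = .C' ∨ (ρ.st m).1 = .F2) →
      ∃ j : ℕ, ρ.cost m = ρ.cost 2 + 3 * j := by
  intro m
  induction m using Nat.strong_induction_on with
  | _ m ih =>
  intro hmn h2m hm
  -- The previous marker: the last visit to `C'` before `m`, or else the visit to `C₀` at `2`.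
  let IsPrev r := r = 2 ∨ (ρ.st r).1 = .C'
  have hprev : IsPrev (Nat.findGreatest IsPrev (m - 1)) :=
    Nat.findGreatest_spec (m := 2) (by omega) (.inl rfl)
  set m' := Nat.findGreatest IsPrev (m - 1)
  have hm'2 : 2 ≤ m' := Nat.le_findGreatest (by omega) (.inl rfl)
  have hm'm : m' < m := by have := Nat.findGreatest_le (P := IsPrev) (m - 1); omega
  have h3 := hcost₂ m' m hm'm (by omega) (hprev.imp (fun h => by rw [h]; exact h2) id) hm
    fun r hr hrm hr' => hr'.elim (fun hC => Nat.findGreatest_is_greatest hr (by omega) (.inr hC))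
      (hF2 r (by omega))
  rw [ρ.sum_Ico_stepCost hm'm.le] at h3
  rcases hm'2.eq_or_lt with h | h
  · rw [← h] at h3
    exact ⟨1, by push_cast; linarith⟩
  · obtain ⟨j, hj⟩ := ih m' hm'm (by omega) h (.inl (hprev.resolve_left h.ne'))
    exact ⟨j + 1, by push_cast; linarith⟩

end Mod12

lemma ne_one_div_pow_of_lt_of_lt {b x : ℝ} {q : ℕ} (hb : 1 < b) (h₁ : b ^ q * x < 1)
    (h₂ : 1 < b ^ (q + 1) * x) (n : ℕ) : x ≠ 1 / b ^ n := by
  rintro rfl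
  have hbn : 0 < b ^ n := by positivity
  rw [mul_one_div, div_lt_one hbn] at h₁
  rw [mul_one_div, one_lt_div hbn] at h₂
  have := (pow_lt_pow_iff_right₀ hb).mp h₁
  have := (pow_lt_pow_iff_right₀ hb).mp h₂
  omega

theorem stmt13_general (x₀ x₁ : ℝ)
    (k : ℕ) (ρ : FinRun Mod12 k)
    (hstart : ρ.st 0 = (L12.A0, x₀)) (hend : ρ.st k = (L12.ExitK, x₁))
    (hnotime : ∀ i < k,
      (ρ.st i).1 ∈ ([L12.A0, L12.C0, L12.D, L12.A, L12.C', L12.F2, L12.H2,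
        L12.A2, L12.D2] : List L12) → ρ.d i = 0)
    (hcost₁ : ∀ i j : ℕ, i < j → j ≤ k →
      ((ρ.st i).1 = L12.A ∨ (ρ.st i).1 = L12.A0) → (ρ.st j).1 = L12.D →
      (∀ m, i < m → m < j → (ρ.st m).1 ≠ L12.D) →
      ∑ m ∈ Finset.Ico i j, ρ.stepCost m = 3)
    (hcost₂ : ∀ i j : ℕ, i < j → j ≤ k →
      ((ρ.st i).1 = L12.C0 ∨ (ρ.st i).1 = L12.C') →
      ((ρ.st j).1 = L12.C' ∨ (ρ.st j).1 = L12.F2) →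
      (∀ m, i < m → m < j → ¬((ρ.st m).1 = L12.C' ∨ (ρ.st m).1 = L12.F2)) →
      ∑ m ∈ Finset.Ico i j, ρ.stepCost m = 3)
    (hcost₃ : ∀ i j : ℕ, i < j → j ≤ k →
      (ρ.st i).1 = L12.D → (∀ m, i < m → m ≤ k → (ρ.st m).1 ≠ L12.D) →
      (ρ.st j).1 = L12.H2 →
      ∑ m ∈ Finset.Ico i j, ρ.stepCost m = 3)
    (hcost₄ : ∀ i j : ℕ, i < j → j ≤ k →
      (ρ.st i).1 = L12.H2 → (ρ.st j).1 = L12.D2 →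
      (∀ m, i < m → m < j → (ρ.st m).1 ≠ L12.D2) →
      ∑ m ∈ Finset.Ico i j, ρ.stepCost m = 3) :
    x₁ = 2 * x₀ ∧ ∀ n : ℕ, x₀ ≠ 1 / 3 ^ n := by
  have hz l (hl : l ∈ [L12.A0, L12.C0, L12.D, L12.A, L12.C', L12.F2, L12.H2, L12.A2, L12.D2]) :
      ρ.NoDelayAt l := fun i hi h => hnotime i hi (h ▸ hl)
  obtain ⟨T, rfl, hT⟩ := Mod12.exists_tail (ρ := ρ) (by rw [hstart]) (by rw [hend])
  have hTD : (ρ.st T).1 = .D := hT 0 (by norm_num)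
  have hT0 : T ≠ 0 := by rintro rfl; rw [hstart] at hTD; cases hTD
  obtain ⟨hx₀, h2, hc2⟩ := Mod12.initial_moves hstart (hz _ (by simp)) (by omega) hTD
  obtain ⟨q, a, hq⟩ := Mod12.exists_phase hstart hx₀ (by omega) hTD (hz _ (by simp))
    (hz _ (by simp)) (hz _ (by simp)) hcost₁
  obtain ⟨hxT, hcT⟩ := hq.clock_cost_of_D hTD (by omega) hcost₁
  obtain ⟨j, hj⟩ := Mod12.exists_cost_eq_of_marker (by omega) h2 (Mod12.loc_ne_F2_of_lt rfl hT)
    hcost₂ (T + 2) le_rfl (by omega) (.inr (hT 2 (by norm_num)))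
  obtain ⟨hxT1, t, ht0, ht1, hcT2, hx₁⟩ := Mod12.tail_costs rfl hT (hz _ (by simp))
    (hz _ (by simp)) (hz _ (by simp)) (hz _ (by simp)) (hz _ (by simp)) hcost₃ hcost₄
  rw [hend] at hx₁
  have hlt : 1 < 3 ^ (q + 1) * x₀ := hxT ▸ hxT1
  have hpos : 0 < x₀ := pos_of_mul_pos_right (a := 3 ^ (q + 1)) (by linarith) (by positivity)
  have hjq : j = q + 1 := by
    have h₁ : (q : ℝ) < j := by linarith
    have h₂ : (j : ℝ) < q + 2 := by linarith
    norm_cast at h₁ h₂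
    omega
  subst hjq
  push_cast at hj hcT
  exact ⟨by linarith, ne_one_div_pow_of_lt_of_lt (by norm_num) hq.clock_lt hlt⟩

/-- **Lemma 14.** Suppose a run `ρ` enters the test/decrement module at
`A₀` with clock value `x₀ ≤ 1` and exits towards `Mod_k` with clock value `x₁`, such that:
(i) no time elapses in `A₀, C₀, D, A, C', F₂, H₂, A₂, D₂`; (ii) every visit to `C₀` or `C'`
is eventually strictly followed by a visit to `C'` or `F₂`; (iii) the accumulated cost
equals exactly `3` along each portion of `ρ` between `A` or `A₀` and the next visit to `D`,
along each portion between `C₀` or `C'` and the next visit to `C'` or `F₂`, along the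
portion between the last visit to `D` and `H₂`, and along the portion between `H₂` and
`D₂`. Then `x₁ = 2·x₀` and `x₀ ≠ 3^(-n)` for every `n ∈ ℕ`. -/
theorem stmt13 (x₀ x₁ : ℝ) (hx₀ : 0 ≤ x₀) (hx₁ : x₀ ≤ 1)
    (k : ℕ) (ρ : FinRun Mod12 k)
    (hstart : ρ.st 0 = (L12.A0, x₀)) (hend : ρ.st k = (L12.ExitK, x₁))
    (hnotime : ∀ i < k,
      (ρ.st i).1 ∈ ([L12.A0, L12.C0, L12.D, L12.A, L12.C', L12.F2, L12.H2,
        L12.A2, L12.D2] : List L12) → ρ.d i = 0)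
    (hfollow : ∀ i ≤ k, ((ρ.st i).1 = L12.C0 ∨ (ρ.st i).1 = L12.C') →
      ∃ j, i < j ∧ j ≤ k ∧ ((ρ.st j).1 = L12.C' ∨ (ρ.st j).1 = L12.F2))
    (hcost₁ : ∀ i j : ℕ, i < j → j ≤ k →
      ((ρ.st i).1 = L12.A ∨ (ρ.st i).1 = L12.A0) → (ρ.st j).1 = L12.D →
      (∀ m, i < m → m < j → (ρ.st m).1 ≠ L12.D) →
      ∑ m ∈ Finset.Ico i j, ρ.stepCost m = 3)
    (hcost₂ : ∀ i j : ℕ, i < j → j ≤ k →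
      ((ρ.st i).1 = L12.C0 ∨ (ρ.st i).1 = L12.C') →
      ((ρ.st j).1 = L12.C' ∨ (ρ.st j).1 = L12.F2) →
      (∀ m, i < m → m < j → ¬((ρ.st m).1 = L12.C' ∨ (ρ.st m).1 = L12.F2)) →
      ∑ m ∈ Finset.Ico i j, ρ.stepCost m = 3)
    (hcost₃ : ∀ i j : ℕ, i < j → j ≤ k →
      (ρ.st i).1 = L12.D → (∀ m, i < m → m ≤ k → (ρ.st m).1 ≠ L12.D) →
      (ρ.st j).1 = L12.H2 →
      ∑ m ∈ Finset.Ico i j, ρ.stepCost m = 3)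
    (hcost₄ : ∀ i j : ℕ, i < j → j ≤ k →
      (ρ.st i).1 = L12.H2 → (ρ.st j).1 = L12.D2 →
      (∀ m, i < m → m < j → (ρ.st m).1 ≠ L12.D2) →
      ∑ m ∈ Finset.Ico i j, ρ.stepCost m = 3) :
    x₁ = 2 * x₀ ∧ ∀ n : ℕ, x₀ ≠ 1 / 3 ^ n :=
  stmt13_general x₀ x₁ k ρ hstart hend hnotime hcost₁ hcost₂ hcost₃ hcost₄
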